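/- arXiv:1411.7046 — 4 statements merged into one kernel-verified Lean document; each statement's English description precedes it below -/
import Mathlib

section
/- The set of real numbers of the form ln(b^2 - c^2)/ln(b), where b and c range over positive integers with b - c even and positive, is dense in the open interval (1, 2), and every such number lies in (1, 2). -/
/-- The set of Hausdorff dimensions `log(b² - c²)/log b` of Sierpinski carpets
`SC(b,c)`, where `b, c` are positive integers with `b - c` even and positive. -/
def sierpinskiDims : Set ℝ :=
  {x | ∃ b c : ℕ, 0 < c ∧ c < b ∧ Even (b - c) ∧
    x = Real.log ((b : ℝ) ^ 2 - (c : ℝ) ^ 2) / Real.log b}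

/-!
Since `b - c ≥ 2`, the number of remaining squares `b² - c² = (b - c)(b + c)` lies strictly
between `b` and `b²`, so the dimension lies in `(1, 2)`. For density it suffices to use the dyadic
carpets `b = 2^N`, `b - c = 2^a` with `1 ≤ a < N`: then `b² - c² = 2^a (2^(N+1) - 2^a)` lies in
`[2^(a+N), 2^(a+N+1))`, so the dimension lies in `[1 + a/N, 1 + (a+1)/N)`, and `1 + a/N` with
`a = ⌊(x - 1) N⌋` is within `1/N` of `x`.
-/

open Real Set

lemma logb_mem_Ioo_one_two {b m : ℝ} (hb : 1 < b) (hbm : b < m) (hm : m < b ^ 2) :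
    logb b m ∈ Ioo 1 2 := by
  have hb0 : 0 < b := by linarith
  constructor
  · simpa [logb_self_eq_one hb] using logb_lt_logb hb hb0 hbm
  · simpa [logb_pow, logb_self_eq_one hb] using logb_lt_logb hb (by linarith) hm

theorem sierpinskiDims_subset_Ioo : sierpinskiDims ⊆ Ioo 1 2 := by
  rintro _ ⟨b, c, hc, hcb, ⟨r, hr⟩, rfl⟩
  have hc : (1 : ℝ) ≤ c := by exact_mod_cast hc
  have hcb : (c : ℝ) + 2 ≤ b := by exact_mod_cast (by omega : c + 2 ≤ b)
  rw [log_div_log]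
  exact logb_mem_Ioo_one_two (by linarith) (by nlinarith) (by nlinarith)

lemma logb_two_sq_sub_sq_two_pow_mem_Ico {a N : ℕ} (haN : a ≤ N) :
    logb 2 (((2 : ℝ) ^ N) ^ 2 - (2 ^ N - 2 ^ a) ^ 2) ∈ Ico ((a + N : ℕ) : ℝ) (a + N + 1 : ℕ) := by
  have hpow : (2 : ℝ) ^ a ≤ 2 ^ N := pow_le_pow_right₀ one_le_two haN
  have hlow : (2 : ℝ) ^ (a + N) ≤ ((2 : ℝ) ^ N) ^ 2 - (2 ^ N - 2 ^ a) ^ 2 := by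
    have : 0 ≤ (2 : ℝ) ^ a * (2 ^ N - 2 ^ a) := mul_nonneg (by positivity) (sub_nonneg.2 hpow)
    rw [pow_add]; nlinarith
  have hup : ((2 : ℝ) ^ N) ^ 2 - (2 ^ N - 2 ^ a) ^ 2 < 2 ^ (a + N + 1) := by
    have := pow_pos (two_pos (α := ℝ)) a
    rw [pow_succ _ (a + N), pow_add]; nlinarith
  have hlogb (k : ℕ) : logb 2 ((2 : ℝ) ^ k) = k := by simp [logb_pow]
  rw [← hlogb, ← hlogb]
  exact ⟨logb_le_logb_of_le one_lt_two (by positivity) hlow,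
    logb_lt_logb one_lt_two ((by positivity : (0 : ℝ) < 2 ^ (a + N)).trans_le hlow) hup⟩

lemma exists_mem_sierpinskiDims_dyadic {a N : ℕ} (ha : 1 ≤ a) (haN : a < N) :
    ∃ d ∈ sierpinskiDims, (a + N : ℝ) ≤ d * N ∧ d * N < a + N + 1 := by
  have hpow : 2 ^ a < 2 ^ N := Nat.pow_lt_pow_right one_lt_two haN
  have hN : (0 : ℝ) < N := by exact_mod_cast (by omega : 0 < N)
  refine ⟨_, ⟨2 ^ N, 2 ^ N - 2 ^ a, by omega, Nat.sub_lt (by positivity) (by positivity), ?_, rfl⟩,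
    ?_⟩
  · rw [Nat.sub_sub_self hpow.le]
    exact Nat.even_pow.2 ⟨even_two, by omega⟩
  · have hd : log (((2 : ℝ) ^ N) ^ 2 - (2 ^ N - 2 ^ a) ^ 2) / log (2 ^ N) * N =
        logb 2 (((2 : ℝ) ^ N) ^ 2 - (2 ^ N - 2 ^ a) ^ 2) := by
      rw [log_pow, div_mul_eq_div_div_swap, div_mul_cancel₀ _ hN.ne', log_div_log]
    push_cast [Nat.cast_sub hpow.le]
    rw [hd]
    simpa using logb_two_sq_sub_sq_two_pow_mem_Ico haN.le

lemma exists_mem_sierpinskiDims_dist_lt {x : ℝ} (hx : x < 2) {N : ℕ} (hN : 1 ≤ (x - 1) * N) :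
    ∃ d ∈ sierpinskiDims, dist d x < 1 / N := by
  have hN0 : (0 : ℝ) < N := by
    by_contra! h
    norm_num [le_antisymm h N.cast_nonneg] at hN
  set a := ⌊(x - 1) * N⌋₊
  have ha : 1 ≤ a := Nat.le_floor (by simpa using hN)
  have haN : a < N := (Nat.floor_lt (by linarith)).2 (by nlinarith)
  have ha_le : (a : ℝ) ≤ (x - 1) * N := Nat.floor_le (by linarith)
  have ha_gt : (x - 1) * N < a + 1 := Nat.lt_floor_add_one _
  obtain ⟨d, hd, hdN, hdN'⟩ := exists_mem_sierpinskiDims_dyadic ha haN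
  refine ⟨d, hd, ?_⟩
  have h : |(d - x) * N| < 1 := abs_lt.2 ⟨by nlinarith, by nlinarith⟩
  rwa [abs_mul, abs_of_pos hN0, ← lt_div_iff₀ hN0, ← dist_eq] at h

/-- **Achievable Sierpinski carpet dimensions are dense in `(1,2)`.**
Every number `log(b² - c²)/log b` with `b, c` positive integers, `b - c` even and
positive, lies in the open interval `(1, 2)`, and the set of all such numbers is
dense in `(1, 2)`. -/
theorem sierpinskiDims_subset_Ioo_and_dense :
    sierpinskiDims ⊆ Set.Ioo (1 : ℝ) 2 ∧
      ∀ x ∈ Set.Ioo (1 : ℝ) 2, x ∈ closure sierpinskiDims := by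
  refine ⟨sierpinskiDims_subset_Ioo, fun x ⟨hx1, hx2⟩ => Metric.mem_closure_iff.2 fun ε hε => ?_⟩
  obtain ⟨N, hN⟩ := exists_nat_gt (max (1 / ε) (1 / (x - 1)))
  have hN0 : (0 : ℝ) < N := (lt_max_of_lt_left (by positivity)).trans hN
  have hNε : 1 / N < ε := (one_div_lt hN0 hε).2 ((le_max_left _ _).trans_lt hN)
  have hNx : 1 ≤ (x - 1) * N := by
    have := (le_max_right _ _).trans_lt hN
    rw [div_lt_iff₀ (by linarith)] at this
    linarith
  obtain ⟨d, hd, hdx⟩ := exists_mem_sierpinskiDims_dist_lt hx2 hNx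
  exact ⟨d, hd, by rw [dist_comm]; exact hdx.trans hNε⟩
end

section
/- Second GKS inequality: for a generalized Ising model with ferromagnetic couplings J_R ≥ 0 on a finite spin set Λ, and any subsets A, B ⊆ Λ, the thermal expectations satisfy ⟨σ_A σ_B⟩ ≥ ⟨σ_A⟩⟨σ_B⟩, where σ_A = ∏_{j∈A} σ_j. -/
variable {Λ : Type*}

/-- The value `±1` of the spin at site `j` in configuration `s`. -/
def spin (s : Λ → Bool) (j : Λ) : ℝ := if s j then 1 else -1

/-- The product `σ_A = ∏_{j ∈ A} σ_j` of the spins in `A`. -/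
def spinProd (A : Finset Λ) (s : Λ → Bool) : ℝ := ∏ j ∈ A, spin s j

variable [Fintype Λ] [DecidableEq Λ]

/-- Generalized Ising Hamiltonian `H(σ) = -Σ_R J_R σ_R` with couplings `J`. -/
def isingHamiltonian (J : Finset Λ → ℝ) (s : Λ → Bool) : ℝ :=
  -∑ R : Finset Λ, J R * spinProd R s

/-- Gibbs (thermal) expectation `⟨f⟩ = Σ_σ f(σ) e^{-βH(σ)} / Σ_σ e^{-βH(σ)}`. -/
noncomputable def gibbsExpect (β : ℝ) (J : Finset Λ → ℝ) (f : (Λ → Bool) → ℝ) : ℝ :=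
  (∑ s : Λ → Bool, f s * Real.exp (-β * isingHamiltonian J s)) /
    ∑ s : Λ → Bool, Real.exp (-β * isingHamiltonian J s)


/-!
Write `w(s) = exp (∑_R K_R σ_R(s))` with `K = β J ≥ 0`. Since `σ_R = ±1`,
`exp (K_R σ_R) = cosh K_R + σ_R sinh K_R`, so `σ_C w` expands into a nonnegative combination of
spin products, each of which has nonnegative sum over configurations: this is the first GKS
inequality `∑_s σ_C(s) w(s) ≥ 0`.

For the second one, duplicate the system:
`Z² (⟨σ_A σ_B⟩ - ⟨σ_A⟩⟨σ_B⟩) = ∑_{s,t} σ_A(s) (σ_B(s) - σ_B(t)) w(s) w(t)`.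
Substituting `t = s q` (pointwise product of `±1` spins) and using `σ_R(s q) = σ_R(s) σ_R(q)`
turns this into `∑_q (1 - σ_B(q)) ∑_s σ_{A ∆ B}(s) exp (∑_R K_R (1 + σ_R(q)) σ_R(s))`,
and every inner sum is nonnegative by the first inequality with couplings `K_R (1 + σ_R(q)) ≥ 0`.
-/

open Finset

section SpinAlgebra

variable {Λ : Type*}

lemma spin_mul_self (s : Λ → Bool) (j : Λ) : spin s j * spin s j = 1 := by
  unfold spin
  split <;> norm_num

lemma spinProd_mul_self (A : Finset Λ) (s : Λ → Bool) : spinProd A s * spinProd A s = 1 := by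
  rw [spinProd, ← prod_mul_distrib]
  exact prod_eq_one fun j _ => spin_mul_self s j

lemma spinProd_eq_one_or_eq_neg_one (A : Finset Λ) (s : Λ → Bool) :
    spinProd A s = 1 ∨ spinProd A s = -1 :=
  mul_self_eq_one_iff.mp (spinProd_mul_self A s)

lemma spinProd_le_one (A : Finset Λ) (s : Λ → Bool) : spinProd A s ≤ 1 := by
  rcases spinProd_eq_one_or_eq_neg_one A s with h | h <;> linarith

lemma neg_one_le_spinProd (A : Finset Λ) (s : Λ → Bool) : -1 ≤ spinProd A s := by
  rcases spinProd_eq_one_or_eq_neg_one A s with h | h <;> linarith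

lemma spinProd_mul_spinProd [DecidableEq Λ] (A B : Finset Λ) (s : Λ → Bool) :
    spinProd A s * spinProd B s = spinProd (symmDiff A B) s := by
  calc spinProd A s * spinProd B s = spinProd (A ∪ B) s * spinProd (A ∩ B) s :=
        prod_union_inter.symm
    _ = spinProd (symmDiff A B) s * (spinProd (A ∩ B) s * spinProd (A ∩ B) s) := by
        rw [← mul_assoc, spinProd, spinProd, spinProd, symmDiff_eq_sup_sdiff_inf, sup_eq_union,
          inf_eq_inter, prod_sdiff inter_subset_union]
    _ = spinProd (symmDiff A B) s := by rw [spinProd_mul_self, mul_one]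

lemma exists_spinProd_eq_prod [DecidableEq Λ] (T : Finset (Finset Λ)) :
    ∃ D : Finset Λ, ∀ s : Λ → Bool, ∏ R ∈ T, spinProd R s = spinProd D s := by
  induction T using Finset.induction_on with
  | empty => exact ⟨∅, fun s => by simp [spinProd]⟩
  | insert R T hR ih =>
    obtain ⟨D, hD⟩ := ih
    exact ⟨symmDiff R D, fun s => by rw [prod_insert hR, hD, spinProd_mul_spinProd]⟩

/-- The pointwise product of two spin configurations, `Bool` standing for `±1`. -/
def configMul (s q : Λ → Bool) : Λ → Bool := fun i => s i == q i

lemma spinProd_configMul (A : Finset Λ) (s q : Λ → Bool) :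
    spinProd A (configMul s q) = spinProd A s * spinProd A q := by
  rw [spinProd, spinProd, spinProd, ← prod_mul_distrib]
  refine prod_congr rfl fun j _ => ?_
  cases hs : s j <;> cases hq : q j <;> simp [spin, configMul, hs, hq]

lemma configMul_involutive (s : Λ → Bool) : Function.Involutive (configMul s) := by
  intro q
  funext j
  cases hs : s j <;> cases hq : q j <;> simp [configMul, hs, hq]

lemma exp_mul_spinProd (k : ℝ) (R : Finset Λ) (s : Λ → Bool) :
    Real.exp (k * spinProd R s) = spinProd R s * Real.sinh k + Real.cosh k := by
  rcases spinProd_eq_one_or_eq_neg_one R s with h | h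
  · rw [h, mul_one, one_mul, add_comm, Real.cosh_add_sinh]
  · rw [h, mul_neg_one, ← Real.cosh_sub_sinh]
    ring

end SpinAlgebra

section BoltzmannWeight

variable {Λ : Type*} [Fintype Λ]

noncomputable def boltzmannWeight (K : Finset Λ → ℝ) (s : Λ → Bool) : ℝ :=
  Real.exp (∑ R, K R * spinProd R s)

lemma boltzmannWeight_mul_configMul (K : Finset Λ → ℝ) (s q : Λ → Bool) :
    boltzmannWeight K s * boltzmannWeight K (configMul s q)
      = boltzmannWeight (fun R => K R * (1 + spinProd R q)) s := by
  rw [boltzmannWeight, boltzmannWeight, boltzmannWeight, ← Real.exp_add, ← sum_add_distrib]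
  simp only [spinProd_configMul]
  exact congrArg Real.exp (sum_congr rfl fun R _ => by ring)

variable [DecidableEq Λ]

lemma sum_spinProd_nonneg (S : Finset Λ) : 0 ≤ ∑ s : Λ → Bool, spinProd S s := by
  have hfactor : ∑ s : Λ → Bool, spinProd S s
      = ∏ j, ∑ b : Bool, if j ∈ S then spin (fun _ => b) j else 1 := by
    rw [Fintype.prod_sum]
    refine sum_congr rfl fun s _ => ?_
    rw [spinProd, prod_ite_mem, univ_inter]
    rfl
  rw [hfactor]
  refine prod_nonneg fun j _ => ?_
  split_ifs <;> simp [spin]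

lemma sum_boltzmannWeight_pos (K : Finset Λ → ℝ) : 0 < ∑ s, boltzmannWeight K s :=
  sum_pos (fun _ _ => Real.exp_pos _) univ_nonempty

theorem gks_first_inequality {K : Finset Λ → ℝ} (hK : 0 ≤ K) (C : Finset Λ) :
    0 ≤ ∑ s, spinProd C s * boltzmannWeight K s := by
  have hexpand : ∀ s, spinProd C s * boltzmannWeight K s
      = ∑ T, ((∏ R ∈ T, Real.sinh (K R)) * ∏ R ∈ Tᶜ, Real.cosh (K R)) *
          (spinProd C s * ∏ R ∈ T, spinProd R s) := by
    intro s
    simp only [boltzmannWeight, Real.exp_sum, exp_mul_spinProd, Fintype.prod_add, mul_sum,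
      prod_mul_distrib]
    exact sum_congr rfl fun T _ => by ring
  rw [sum_congr rfl fun s _ => hexpand s, sum_comm]
  refine sum_nonneg fun T _ => ?_
  obtain ⟨D, hD⟩ := exists_spinProd_eq_prod T
  simp only [hD, spinProd_mul_spinProd, ← mul_sum]
  have hsinh : 0 ≤ ∏ R ∈ T, Real.sinh (K R) :=
    prod_nonneg fun R _ => Real.sinh_nonneg_iff.mpr (hK R)
  have hcosh : 0 ≤ ∏ R ∈ Tᶜ, Real.cosh (K R) := prod_nonneg fun R _ => (Real.cosh_pos _).le
  exact mul_nonneg (mul_nonneg hsinh hcosh) (sum_spinProd_nonneg _)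

theorem gks_second_inequality_sum {K : Finset Λ → ℝ} (hK : 0 ≤ K) (A B : Finset Λ) :
    (∑ s, spinProd A s * boltzmannWeight K s) * ∑ s, spinProd B s * boltzmannWeight K s
      ≤ (∑ s, spinProd A s * spinProd B s * boltzmannWeight K s) * ∑ s, boltzmannWeight K s := by
  set w := boltzmannWeight K
  have hduplicate : (∑ s, spinProd A s * spinProd B s * w s) * (∑ s, w s)
        - (∑ s, spinProd A s * w s) * (∑ s, spinProd B s * w s)
      = ∑ s, ∑ t, spinProd A s * (spinProd B s - spinProd B t) * (w s * w t) := by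
    rw [sum_mul_sum, sum_mul_sum, ← sum_sub_distrib]
    refine sum_congr rfl fun s _ => ?_
    rw [← sum_sub_distrib]
    exact sum_congr rfl fun t _ => by ring
  have hsubstitute : ∀ s, ∑ t, spinProd A s * (spinProd B s - spinProd B t) * (w s * w t)
      = ∑ q, (1 - spinProd B q) *
          (spinProd (symmDiff A B) s * boltzmannWeight (fun R => K R * (1 + spinProd R q)) s) := by
    intro s
    rw [← Equiv.sum_comp (configMul_involutive s).toPerm]
    refine sum_congr rfl fun q _ => ?_
    rw [Function.Involutive.coe_toPerm, boltzmannWeight_mul_configMul, spinProd_configMul,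
      ← spinProd_mul_spinProd]
    ring
  rw [← sub_nonneg, hduplicate, sum_congr rfl fun s _ => hsubstitute s, sum_comm]
  refine sum_nonneg fun q _ => ?_
  rw [← mul_sum]
  refine mul_nonneg (sub_nonneg.mpr (spinProd_le_one B q)) (gks_first_inequality ?_ _)
  exact fun R => mul_nonneg (hK R) (neg_le_iff_add_nonneg'.mp (neg_one_le_spinProd R q))

lemma gibbsExpect_eq (β : ℝ) (J : Finset Λ → ℝ) (f : (Λ → Bool) → ℝ) :
    gibbsExpect β J f
      = (∑ s, f s * boltzmannWeight (β • J) s) / ∑ s, boltzmannWeight (β • J) s := by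
  have hweight : ∀ s, Real.exp (-β * isingHamiltonian J s) = boltzmannWeight (β • J) s := by
    intro s
    rw [isingHamiltonian, boltzmannWeight, neg_mul_neg, mul_sum]
    simp only [Pi.smul_apply, smul_eq_mul, mul_assoc]
  simp only [gibbsExpect, hweight]

end BoltzmannWeight

/-- **Second GKS inequality.** For a generalized Ising model with ferromagnetic
couplings `J_R ≥ 0` on a finite spin set `Λ`, and any `A, B ⊆ Λ`,
`⟨σ_A σ_B⟩ ≥ ⟨σ_A⟩⟨σ_B⟩`. -/
theorem gks_second_inequality {Λ : Type*} [Fintype Λ] [DecidableEq Λ]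
    (J : Finset Λ → ℝ) (hJ : ∀ R, 0 ≤ J R) (β : ℝ) (hβ : 0 < β) (A B : Finset Λ) :
    gibbsExpect β J (fun s => spinProd A s * spinProd B s)
      ≥ gibbsExpect β J (spinProd A) * gibbsExpect β J (spinProd B) := by
  have hZ := sum_boltzmannWeight_pos (β • J)
  have hsum := gks_second_inequality_sum (K := β • J) (fun R => mul_nonneg hβ.le (hJ R)) A B
  rw [gibbsExpect_eq, gibbsExpect_eq, gibbsExpect_eq, ge_iff_le, div_mul_div_comm,
    div_le_div_iff₀ (mul_pos hZ hZ) hZ]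
  exact (mul_le_mul_of_nonneg_right hsum hZ.le).trans_eq (by ring)
end

section
/- Merlini–Gruber duality of partition functions: let (Λ, K) be a finite generalized Ising model with interaction supports B ∈ 𝓑 and couplings K_B > 0, and let (Λ*, K*) be the dual model constructed from a generating set of the constraint group, with e^{-2K*_{B*}} = ∏_{B ∈ φ^{-1}(B*)} tanh K_B. Then Z(Λ, K) = 2^{(|Λ| - |Λ*| + N_S - N_{S*})/2} · ∏_{B∈𝓑} (sinh 2K_B)^{1/2} · Z(Λ*, K*). -/
/-!
Writing each Boltzmann factor as `e^{K s} = cosh K · (1 + s tanh K)` for `s = ±1` and summing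
over the spins kills every term except those indexed by constraints `C ⊆ 𝓑` (every site covered
an even number of times), so `Z(Λ, K) = 2^{|Λ|} ∏_B cosh K_B · Σ_C ∏_{B ∈ C} tanh K_B`.
The map sending a dual configuration `T` to the constraint `{B : |T ∩ φ(B)| odd}` is a
homomorphism for symmetric difference, onto the constraint group by the generating property and
with kernel the dual symmetry group `S*`. Under it `∏_{B ∈ C} tanh K_B` becomes, by the choice of
`K*`, the dual Boltzmann weight of `T` times `e^{-Σ K*}`, so `Z(Λ*, K*)` is `|S*|` times the same
constraint sum. The power of `2` comes from the counts `2^{|Λ|} |𝒞| = 2^{|𝓑|} |S|` (sum the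
characters `(-1)^{|R ∩ B|}` over `R` and over `C` in either order) and `2^{|Λ*|} = |S*| |𝒞|`.
-/

/-- Partition function of a generalized Ising model with interaction supports `𝓑`
and couplings `K`: `Z = Σ_{R ⊆ Λ} exp(Σ_{B ∈ 𝓑} K_B (-1)^{|R ∩ B|})`, where `R`
is the set of down spins. -/
noncomputable def isingZ {Λ : Type*} [Fintype Λ] [DecidableEq Λ]
    (𝓑 : Finset (Finset Λ)) (K : Finset Λ → ℝ) : ℝ :=
  ∑ R : Finset Λ, Real.exp (∑ B ∈ 𝓑, K B * (-1 : ℝ) ^ ((R ∩ B).card))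

open Finset
open scoped symmDiff

namespace Finset

variable {α : Type*} [DecidableEq α]

theorem card_symmDiff_add_two_mul_card_inter (s t : Finset α) :
    #(s ∆ t) + 2 * #(s ∩ t) = #s + #t := by
  have hsub : s ∩ t ⊆ s ∪ t := inter_subset_left.trans subset_union_left
  have hle := card_le_card hsub
  rw [symmDiff_eq_sup_sdiff_inf, sup_eq_union, inf_eq_inter, card_sdiff_of_subset hsub,
    ← card_union_add_card_inter]
  omega

theorem even_card_symmDiff_iff (s t : Finset α) : Even #(s ∆ t) ↔ (Even #s ↔ Even #t) := by
  rw [← Nat.even_add, ← card_symmDiff_add_two_mul_card_inter]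
  simp [Nat.even_add]

theorem filter_symmDiff (p : α → Prop) [DecidablePred p] (s t : Finset α) :
    {a ∈ s ∆ t | p a} = {a ∈ s | p a} ∆ {a ∈ t | p a} := by
  ext a
  simp only [mem_filter, mem_symmDiff]
  tauto

theorem prod_pow_card_inter {M : Type*} [CommMonoid M] (x : M) (R : Finset α)
    (C : Finset (Finset α)) :
    ∏ B ∈ C, x ^ #(R ∩ B) = ∏ j ∈ R, x ^ #{B ∈ C | j ∈ B} := by
  rw [prod_pow_eq_pow_sum, prod_pow_eq_pow_sum]
  congr 1
  simp only [card_eq_sum_ones, sum_filter, ← filter_mem_eq_inter]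
  exact sum_comm

theorem sum_powerset_prod_neg_one_pow {ι A : Type*} [CommRing A] (s : Finset ι) (n : ι → ℕ) :
    ∑ t ∈ s.powerset, ∏ i ∈ t, (-1 : A) ^ n i = if ∀ i ∈ s, Even (n i) then 2 ^ #s else 0 := by
  have hfactor (i : ι) : 1 + (-1 : A) ^ n i = if Even (n i) then 2 else 0 := by
    rcases Nat.even_or_odd (n i) with h | h
    · rw [h.neg_one_pow, if_pos h, one_add_one_eq_two]
    · rw [h.neg_one_pow, if_neg (Nat.not_even_iff_odd.mpr h), add_neg_cancel]
  rw [← prod_one_add, prod_congr rfl fun i _ => hfactor i, prod_ite_zero, prod_const]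

theorem sum_prod_neg_one_pow_card_inter {A : Type*} [Fintype α] [CommRing A]
    (C : Finset (Finset α)) :
    ∑ R : Finset α, ∏ B ∈ C, (-1 : A) ^ #(R ∩ B)
      = if ∀ j, Even #{B ∈ C | j ∈ B} then 2 ^ Fintype.card α else 0 := by
  simp_rw [prod_pow_card_inter]
  rw [← powerset_univ, sum_powerset_prod_neg_one_pow]
  simp

theorem sum_comp_eq_card_ker_smul {β M : Type*} [Fintype α] [DecidableEq β] [AddCommMonoid M]
    (f : Finset α → Finset β) (hf : ∀ s t, f (s ∆ t) = f s ∆ f t) (t : Finset (Finset β))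
    (hmaps : ∀ s, f s ∈ t) (hsurj : ∀ c ∈ t, ∃ s, f s = c) (w : Finset β → M) :
    ∑ s, w (f s) = #{s | f s = ∅} • ∑ c ∈ t, w c := by
  rw [← sum_fiberwise_of_maps_to (fun s _ => hmaps s), smul_sum]
  refine sum_congr rfl fun c hc => ?_
  obtain ⟨s₀, rfl⟩ := hsurj c hc
  rw [sum_congr rfl fun s hs => congrArg w (mem_filter.mp hs).2, sum_const]
  congr 1
  -- translation by `s₀` identifies each fibre with the kernel
  refine card_bij' (fun s _ => s ∆ s₀) (fun s _ => s ∆ s₀) ?_ ?_ ?_ ?_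
  · intro s hs
    simp only [mem_filter, mem_univ, true_and] at hs ⊢
    rw [hf, hs, symmDiff_self, bot_eq_empty]
  · intro s hs
    simp only [mem_filter, mem_univ, true_and] at hs ⊢
    rw [hf, hs, ← bot_eq_empty, bot_symmDiff]
  · intro s _
    exact symmDiff_symmDiff_cancel_right s₀ s
  · intro s _
    exact symmDiff_symmDiff_cancel_right s₀ s

end Finset

namespace Real

theorem exp_mul_neg_one_pow (x : ℝ) (n : ℕ) :
    exp (x * (-1) ^ n) = cosh x * (1 + (-1) ^ n * tanh x) := by
  have hsinh : cosh x * tanh x = sinh x := by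
    rw [tanh_eq_sinh_div_cosh, mul_div_cancel₀ _ (cosh_pos x).ne']
  rcases Nat.even_or_odd n with h | h
  · rw [h.neg_one_pow, mul_one, one_mul, mul_add, mul_one, hsinh, cosh_add_sinh]
  · rw [h.neg_one_pow, mul_neg_one, neg_one_mul, mul_add, mul_one, mul_neg, hsinh,
      ← sub_eq_add_neg, cosh_sub_sinh]

theorem exp_neg_add_mul_neg_one_pow (x : ℝ) (n : ℕ) :
    exp (-x + x * (-1) ^ n) = if Odd n then exp (-2 * x) else 1 := by
  rcases Nat.even_or_odd n with h | h
  · rw [h.neg_one_pow, if_neg (Nat.not_odd_iff_even.mpr h), mul_one, neg_add_cancel, exp_zero]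
  · rw [h.neg_one_pow, if_pos h]
    ring_nf

theorem tanh_nonneg {x : ℝ} (hx : 0 ≤ x) : 0 ≤ tanh x := by
  rw [tanh_eq_sinh_div_cosh]
  exact div_nonneg (sinh_nonneg_iff.mpr hx) (cosh_pos x).le

theorem sqrt_sinh_two_mul {x : ℝ} (hx : 0 ≤ x) :
    √(sinh (2 * x)) = √2 * √(tanh x) * cosh x := by
  have hsinh : sinh (2 * x) = 2 * tanh x * cosh x ^ 2 := by
    rw [sinh_two_mul, tanh_eq_sinh_div_cosh]
    field_simp [(cosh_pos x).ne']
  rw [hsinh, sqrt_mul (by have := tanh_nonneg hx; positivity), sqrt_mul zero_le_two,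
    sqrt_sq (cosh_pos x).le]

theorem sqrt_two_zpow_mul_sqrt_two_pow_mul_two_pow {a b c d e : ℕ} (h : a + b = c + d + e) :
    √2 ^ ((a : ℤ) - b + d - e) * √2 ^ c * 2 ^ e = 2 ^ a := by
  have hexp : ((a : ℤ) - b + d - e) + c = 2 * ((a : ℤ) - e) := by omega
  have hsqrt : √2 ^ (2 : ℤ) = 2 := by
    rw [zpow_two, mul_self_sqrt zero_le_two]
  rw [← zpow_natCast (√2) c, ← zpow_add₀ (by positivity), hexp, zpow_mul, hsqrt,
    ← zpow_natCast (2 : ℝ) e, ← zpow_add₀ two_ne_zero, sub_add_cancel, zpow_natCast]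

end Real

namespace IsingDuality

variable {Λ : Type*} [DecidableEq Λ] {Λstar : Type*} [Fintype Λstar] [DecidableEq Λstar]

section Primal

variable [Fintype Λ]

def constraints (𝓑 : Finset (Finset Λ)) : Finset (Finset (Finset Λ)) :=
  {C ∈ 𝓑.powerset | ∀ j, Even #{B ∈ C | j ∈ B}}

def symmetries (𝓑 : Finset (Finset Λ)) : Finset (Finset Λ) :=
  {R | ∀ B ∈ 𝓑, Even #(R ∩ B)}

theorem card_symmetries (𝓑 : Finset (Finset Λ)) :
    #(symmetries 𝓑) = Nat.card {R : Finset Λ // ∀ B ∈ 𝓑, Even #(R ∩ B)} := by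
  rw [symmetries, ← Fintype.card_subtype, Nat.card_eq_fintype_card]

theorem symmDiff_mem_constraints {𝓑 C D : Finset (Finset Λ)} (hC : C ∈ constraints 𝓑)
    (hD : D ∈ constraints 𝓑) : C ∆ D ∈ constraints 𝓑 := by
  simp only [constraints, mem_filter, mem_powerset] at hC hD ⊢
  refine ⟨symmDiff_subset_union.trans (union_subset hC.1 hD.1), fun j => ?_⟩
  rw [filter_symmDiff, even_card_symmDiff_iff]
  exact iff_of_true (hC.2 j) (hD.2 j)

theorem two_pow_card_mul_card_constraints (𝓑 : Finset (Finset Λ)) :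
    2 ^ Fintype.card Λ * #(constraints 𝓑) = 2 ^ #𝓑 * #(symmetries 𝓑) := by
  have hconstraints : ∑ C ∈ 𝓑.powerset, ∑ R : Finset Λ, ∏ B ∈ C, (-1 : ℤ) ^ #(R ∩ B)
      = 2 ^ Fintype.card Λ * #(constraints 𝓑) := by
    rw [sum_congr rfl fun C _ => sum_prod_neg_one_pow_card_inter C, ← sum_filter, sum_const,
      nsmul_eq_mul, mul_comm, constraints]
  have hsymmetries : ∑ R : Finset Λ, ∑ C ∈ 𝓑.powerset, ∏ B ∈ C, (-1 : ℤ) ^ #(R ∩ B)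
      = 2 ^ #𝓑 * #(symmetries 𝓑) := by
    rw [sum_congr rfl fun R _ => sum_powerset_prod_neg_one_pow 𝓑 fun B => #(R ∩ B),
      symmetries, card_filter, Nat.cast_sum, mul_sum]
    refine sum_congr rfl fun R _ => ?_
    split_ifs <;> simp
  exact_mod_cast hconstraints.symm.trans (sum_comm.trans hsymmetries)

theorem sum_prod_one_add_neg_one_pow_mul {A : Type*} [CommRing A] (𝓑 : Finset (Finset Λ))
    (x : Finset Λ → A) :
    ∑ R : Finset Λ, ∏ B ∈ 𝓑, (1 + (-1) ^ #(R ∩ B) * x B)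
      = 2 ^ Fintype.card Λ * ∑ C ∈ constraints 𝓑, ∏ B ∈ C, x B := by
  simp only [prod_one_add, prod_mul_distrib]
  rw [sum_comm, constraints, sum_filter, mul_sum]
  refine sum_congr rfl fun C _ => ?_
  rw [← sum_mul, sum_prod_neg_one_pow_card_inter, ite_mul, zero_mul, mul_ite, mul_zero]

theorem isingZ_eq_prod_cosh_mul (𝓑 : Finset (Finset Λ)) (K : Finset Λ → ℝ) :
    isingZ 𝓑 K = (∏ B ∈ 𝓑, Real.cosh (K B))
      * (2 ^ Fintype.card Λ * ∑ C ∈ constraints 𝓑, ∏ B ∈ C, Real.tanh (K B)) := by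
  simp only [isingZ, Real.exp_sum, Real.exp_mul_neg_one_pow, prod_mul_distrib]
  rw [← mul_sum, sum_prod_one_add_neg_one_pow_mul]

end Primal

section Dual

variable (𝓑 : Finset (Finset Λ)) (Cgen : Λstar → Finset (Finset Λ))

def dualBond (B : Finset Λ) : Finset Λstar := {i | B ∈ Cgen i}

def constraintOf (T : Finset Λstar) : Finset (Finset Λ) :=
  {B ∈ 𝓑 | Odd #(T ∩ dualBond Cgen B)}

theorem inter_dualBond (T : Finset Λstar) (B : Finset Λ) :
    T ∩ dualBond Cgen B = {i ∈ T | B ∈ Cgen i} := by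
  ext i
  simp [dualBond]

theorem constraintOf_symmDiff (T T' : Finset Λstar) :
    constraintOf 𝓑 Cgen (T ∆ T') = constraintOf 𝓑 Cgen T ∆ constraintOf 𝓑 Cgen T' := by
  ext B
  simp only [constraintOf, mem_symmDiff, mem_filter, ← Nat.not_even_iff_odd]
  rw [← inf_eq_inter, inf_symmDiff_distrib_right, even_card_symmDiff_iff]
  tauto

theorem constraintOf_singleton (hsub : ∀ i, Cgen i ⊆ 𝓑) (i : Λstar) :
    constraintOf 𝓑 Cgen {i} = Cgen i := by
  ext B
  rw [constraintOf, mem_filter, inter_dualBond, filter_singleton]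
  by_cases hB : B ∈ Cgen i
  · simp [hB, hsub i hB]
  · simp [hB]

theorem prod_tanh_constraintOf (K : Finset Λ → ℝ) (Kstar : Finset Λstar → ℝ)
    (hKstar : ∀ Bs ∈ 𝓑.image (dualBond Cgen),
      Real.exp (-2 * Kstar Bs) = ∏ B ∈ 𝓑 with dualBond Cgen B = Bs, Real.tanh (K B))
    (T : Finset Λstar) :
    ∏ B ∈ constraintOf 𝓑 Cgen T, Real.tanh (K B)
      = ∏ Bs ∈ 𝓑.image (dualBond Cgen), Real.exp (-Kstar Bs + Kstar Bs * (-1) ^ #(T ∩ Bs)) := by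
  simp only [Real.exp_neg_add_mul_neg_one_pow]
  calc ∏ B ∈ constraintOf 𝓑 Cgen T, Real.tanh (K B)
      = ∏ B ∈ 𝓑, if Odd #(T ∩ dualBond Cgen B) then Real.tanh (K B) else 1 := prod_filter _ _
    _ = ∏ Bs ∈ 𝓑.image (dualBond Cgen), ∏ B ∈ 𝓑 with dualBond Cgen B = Bs,
          if Odd #(T ∩ dualBond Cgen B) then Real.tanh (K B) else 1 :=
        (prod_fiberwise_of_maps_to (fun B hB => mem_image_of_mem _ hB) _).symm
    _ = _ := by
        refine prod_congr rfl fun Bs hBs => ?_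
        rw [prod_congr rfl fun B hB => by rw [(mem_filter.mp hB).2], prod_ite_irrel,
          prod_const_one, hKstar Bs hBs]

theorem prod_sqrt_tanh_eq_exp_neg_sum {K : Finset Λ → ℝ} (hK : ∀ B ∈ 𝓑, 0 < K B)
    (Kstar : Finset Λstar → ℝ)
    (hKstar : ∀ Bs ∈ 𝓑.image (dualBond Cgen),
      Real.exp (-2 * Kstar Bs) = ∏ B ∈ 𝓑 with dualBond Cgen B = Bs, Real.tanh (K B)) :
    ∏ B ∈ 𝓑, √(Real.tanh (K B)) = Real.exp (-∑ Bs ∈ 𝓑.image (dualBond Cgen), Kstar Bs) := by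
  rw [← prod_fiberwise_of_maps_to (fun B hB => mem_image_of_mem (dualBond Cgen) hB),
    ← sum_neg_distrib, Real.exp_sum]
  refine prod_congr rfl fun Bs hBs => ?_
  rw [← Real.sqrt_prod _ fun B hB => Real.tanh_nonneg (hK B (mem_filter.mp hB).1).le,
    ← hKstar Bs hBs, show -2 * Kstar Bs = -Kstar Bs + -Kstar Bs by ring, Real.exp_add,
    Real.sqrt_mul_self (Real.exp_nonneg _)]

variable [Fintype Λ]

theorem constraintOf_mem_constraints (hsub : ∀ i, Cgen i ⊆ 𝓑)
    (hconstraint : ∀ i j, Even #{B ∈ Cgen i | j ∈ B}) (T : Finset Λstar) :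
    constraintOf 𝓑 Cgen T ∈ constraints 𝓑 := by
  induction T using Finset.induction_on with
  | empty => simp [constraintOf, constraints]
  | insert i T hi ih =>
    rw [insert_eq, ← sup_eq_union, ← (disjoint_singleton_left.mpr hi).symmDiff_eq_sup,
      constraintOf_symmDiff, constraintOf_singleton 𝓑 Cgen hsub]
    exact symmDiff_mem_constraints (mem_filter.mpr ⟨mem_powerset.mpr (hsub i), hconstraint i⟩) ih

theorem constraintOf_eq_empty_iff (T : Finset Λstar) :
    constraintOf 𝓑 Cgen T = ∅ ↔ T ∈ symmetries (𝓑.image (dualBond Cgen)) := by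
  simp [constraintOf, symmetries, filter_eq_empty_iff]

theorem exists_constraintOf_eq
    (hgen : ∀ C ⊆ 𝓑, (∀ j, Even #{B ∈ C | j ∈ B}) →
      ∃ T : Finset Λstar, ∀ B, B ∈ C ↔ Odd #{i ∈ T | B ∈ Cgen i})
    {C : Finset (Finset Λ)} (hC : C ∈ constraints 𝓑) :
    ∃ T, constraintOf 𝓑 Cgen T = C := by
  rw [constraints, mem_filter, mem_powerset] at hC
  obtain ⟨T, hT⟩ := hgen C hC.1 hC.2
  refine ⟨T, ext fun B => ?_⟩
  rw [constraintOf, mem_filter, inter_dualBond, ← hT]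
  exact ⟨And.right, fun hB => ⟨hC.1 hB, hB⟩⟩

variable (hsub : ∀ i, Cgen i ⊆ 𝓑) (hconstraint : ∀ i j, Even #{B ∈ Cgen i | j ∈ B})
  (hgen : ∀ C ⊆ 𝓑, (∀ j, Even #{B ∈ C | j ∈ B}) →
    ∃ T : Finset Λstar, ∀ B, B ∈ C ↔ Odd #{i ∈ T | B ∈ Cgen i})
include hsub hconstraint hgen

theorem sum_comp_constraintOf {M : Type*} [AddCommMonoid M] (w : Finset (Finset Λ) → M) :
    ∑ T, w (constraintOf 𝓑 Cgen T)
      = #(symmetries (𝓑.image (dualBond Cgen))) • ∑ C ∈ constraints 𝓑, w C := by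
  rw [sum_comp_eq_card_ker_smul _ (constraintOf_symmDiff 𝓑 Cgen) _
    (constraintOf_mem_constraints 𝓑 Cgen hsub hconstraint)
    (fun C hC => exists_constraintOf_eq 𝓑 Cgen hgen hC)]
  congr 2
  ext T
  rw [mem_filter, constraintOf_eq_empty_iff]
  simp

theorem two_pow_card_dual :
    2 ^ Fintype.card Λstar = #(symmetries (𝓑.image (dualBond Cgen))) * #(constraints 𝓑) := by
  simpa [Fintype.card_finset] using
    sum_comp_constraintOf 𝓑 Cgen hsub hconstraint hgen fun _ => (1 : ℕ)

theorem card_add_card_dual {NS NSstar : ℕ} (hNS : #(symmetries 𝓑) = 2 ^ NS)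
    (hNSstar : #(symmetries (𝓑.image (dualBond Cgen))) = 2 ^ NSstar) :
    Fintype.card Λ + Fintype.card Λstar = #𝓑 + NS + NSstar := by
  apply Nat.pow_right_injective le_rfl
  have hprimal := two_pow_card_mul_card_constraints 𝓑
  have hdual := two_pow_card_dual 𝓑 Cgen hsub hconstraint hgen
  rw [hNS] at hprimal
  rw [hNSstar] at hdual
  simp only [pow_add]
  rw [hdual, mul_left_comm, hprimal, mul_comm]

theorem prod_sqrt_tanh_mul_isingZ_dual {K : Finset Λ → ℝ} (hK : ∀ B ∈ 𝓑, 0 < K B)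
    (Kstar : Finset Λstar → ℝ)
    (hKstar : ∀ Bs ∈ 𝓑.image (dualBond Cgen),
      Real.exp (-2 * Kstar Bs) = ∏ B ∈ 𝓑 with dualBond Cgen B = Bs, Real.tanh (K B)) :
    (∏ B ∈ 𝓑, √(Real.tanh (K B))) * isingZ (𝓑.image (dualBond Cgen)) Kstar
      = #(symmetries (𝓑.image (dualBond Cgen)))
        * ∑ C ∈ constraints 𝓑, ∏ B ∈ C, Real.tanh (K B) := by
  rw [← nsmul_eq_mul, ← sum_comp_constraintOf 𝓑 Cgen hsub hconstraint hgen, isingZ, mul_sum,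
    prod_sqrt_tanh_eq_exp_neg_sum 𝓑 Cgen hK Kstar hKstar]
  refine sum_congr rfl fun T _ => ?_
  rw [prod_tanh_constraintOf 𝓑 Cgen K Kstar hKstar, ← Real.exp_add, ← Real.exp_sum,
    sum_add_distrib, sum_neg_distrib]

end Dual

end IsingDuality

open IsingDuality in
/-- **Merlini–Gruber duality of partition functions.**
Let `(Λ, K)` be a finite generalized Ising model with interaction supports
`𝓑` and couplings `K_B > 0`. Let `{C_i}_{i ∈ Λ*}` be a generating set of the
constraint group (each `C_i ⊆ 𝓑` with every site covered an even number of
times, and every constraint a symmetric-difference combination of the `C_i`),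
let `φ(B) = {i : B ∈ C_i}` be the dual interaction sets, and let the dual
couplings satisfy `e^{-2K*_{B*}} = ∏_{B ∈ φ⁻¹(B*)} tanh K_B`. If `2^{N_S}` and
`2^{N_{S*}}` are the orders of the symmetry groups of the two models, then
`Z(Λ,K) = √2^{|Λ| - |Λ*| + N_S - N_{S*}} · ∏_{B∈𝓑} √(sinh 2K_B) · Z(Λ*,K*)`. -/
theorem merlini_gruber_duality
    {Λ : Type*} [Fintype Λ] [DecidableEq Λ]
    {Λstar : Type*} [Fintype Λstar] [DecidableEq Λstar]
    (𝓑 : Finset (Finset Λ)) (K : Finset Λ → ℝ) (hK : ∀ B ∈ 𝓑, 0 < K B)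
    (Cgen : Λstar → Finset (Finset Λ))
    (hsub : ∀ i, Cgen i ⊆ 𝓑)
    (hconstraint : ∀ i, ∀ j : Λ, Even (((Cgen i).filter (fun B => j ∈ B)).card))
    (hgen : ∀ C : Finset (Finset Λ), C ⊆ 𝓑 →
      (∀ j : Λ, Even ((C.filter (fun B => j ∈ B)).card)) →
      ∃ T : Finset Λstar, ∀ B : Finset Λ,
        B ∈ C ↔ Odd ((T.filter (fun i => B ∈ Cgen i)).card))
    (Kstar : Finset Λstar → ℝ)
    (hKstar : ∀ Bs ∈ 𝓑.image (fun B => Finset.univ.filter (fun i => B ∈ Cgen i)),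
      Real.exp (-2 * Kstar Bs)
        = ∏ B ∈ 𝓑.filter (fun B => Finset.univ.filter (fun i => B ∈ Cgen i) = Bs),
            Real.tanh (K B))
    (NS NSstar : ℕ)
    (hNS : Nat.card {R : Finset Λ // ∀ B ∈ 𝓑, Even ((R ∩ B).card)} = 2 ^ NS)
    (hNSstar : Nat.card {Rs : Finset Λstar //
      ∀ Bs ∈ 𝓑.image (fun B => Finset.univ.filter (fun i => B ∈ Cgen i)),
        Even ((Rs ∩ Bs).card)} = 2 ^ NSstar) :
    isingZ 𝓑 K
      = Real.sqrt 2 ^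
          ((Fintype.card Λ : ℤ) - (Fintype.card Λstar : ℤ) + (NS : ℤ) - (NSstar : ℤ))
        * (∏ B ∈ 𝓑, Real.sqrt (Real.sinh (2 * K B)))
        * isingZ (𝓑.image (fun B => Finset.univ.filter (fun i => B ∈ Cgen i))) Kstar := by
  have hsymm : #(symmetries 𝓑) = 2 ^ NS := (card_symmetries 𝓑).trans hNS
  have hsymmDual : #(symmetries (𝓑.image (dualBond Cgen))) = 2 ^ NSstar :=
    (card_symmetries _).trans hNSstar
  have hcard := card_add_card_dual 𝓑 Cgen hsub hconstraint hgen hsymm hsymmDual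
  have hdual := prod_sqrt_tanh_mul_isingZ_dual 𝓑 Cgen hsub hconstraint hgen hK Kstar hKstar
  rw [hsymmDual, Nat.cast_pow, Nat.cast_ofNat] at hdual
  unfold dualBond at hdual
  rw [isingZ_eq_prod_cosh_mul, ← Real.sqrt_two_zpow_mul_sqrt_two_pow_mul_two_pow hcard,
    prod_congr rfl fun B hB => Real.sqrt_sinh_two_mul (hK B hB).le,
    prod_mul_distrib, prod_mul_distrib, prod_const]
  linear_combination -(√2 ^ ((Fintype.card Λ : ℤ) - Fintype.card Λstar + NS - NSstar)
    * √2 ^ #𝓑 * ∏ B ∈ 𝓑, Real.cosh (K B)) * hdual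
end

section
/- In terms of the linear lattice size L = b^l, the number of qubits of the level-l fractal product code scales as Θ(L^{2d}) where d = ln(b^2-c^2)/ln(b) is the dimension of the Sierpinski carpet SC(b,c); in particular, if d ≤ 3/2 then n(l) = O(L^3). -/
/-- Closed-form vertex count `|V(l)|` of the level-`l` Sierpinski carpet graph. -/
noncomputable def scV (b c : ℕ) (l : ℕ) : ℝ :=
  ((b : ℝ) ^ 2 - (c : ℝ) ^ 2) ^ l
    + 2 * c * ((b : ℝ) ^ l - ((b : ℝ) ^ 2 - (c : ℝ) ^ 2) ^ l)
        / ((b : ℝ) - ((b : ℝ) ^ 2 - (c : ℝ) ^ 2))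
    - (1 - ((b : ℝ) ^ 2 - (c : ℝ) ^ 2) ^ l) / (1 - ((b : ℝ) ^ 2 - (c : ℝ) ^ 2))
    + 2 * (b : ℝ) ^ l + 1

/-- Closed-form edge count `|E(l)|` of the level-`l` Sierpinski carpet graph. -/
noncomputable def scE (b c : ℕ) (l : ℕ) : ℝ :=
  2 * ((b : ℝ) ^ 2 - (c : ℝ) ^ 2) ^ l
    + 2 * c * ((b : ℝ) ^ l - ((b : ℝ) ^ 2 - (c : ℝ) ^ 2) ^ l)
        / ((b : ℝ) - ((b : ℝ) ^ 2 - (c : ℝ) ^ 2))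
    + 2 * (b : ℝ) ^ l

/-- Closed-form interior plaquette count `|P_i(l)|`. -/
noncomputable def scP (b c : ℕ) (l : ℕ) : ℝ := ((b : ℝ) ^ 2 - (c : ℝ) ^ 2) ^ l

/-- The number of physical qubits `n(l) = |V(l)|² + |E(l)|² + |P_i(l)|²` of the
level-`l` fractal product code. -/
noncomputable def nFPC (b c : ℕ) (l : ℕ) : ℝ :=
  scV b c l ^ 2 + scE b c l ^ 2 + scP b c l ^ 2

/-- The number of encoded qubits
`k(l) = 1 + ((1-(b²-c²)^l)/(1-(b²-c²)))²` of the level-`l` fractal product code. -/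
noncomputable def kFPC (b c : ℕ) (l : ℕ) : ℝ :=
  1 + ((1 - ((b : ℝ) ^ 2 - (c : ℝ) ^ 2) ^ l) / (1 - ((b : ℝ) ^ 2 - (c : ℝ) ^ 2))) ^ 2

/-! Write `A = b² - c²` and `L = b^l`. Since `c < b`, `A ≥ b + 1`, so each quotient
`(xˡ - Aˡ)/(x - A)` in the closed forms (with `x = b` or `x = 1`) lies in `[0, Aˡ]`. Hence
`0 ≤ |V(l)|, |E(l)| ≤ (4 + 2c) Aˡ` while `|P_i(l)| = Aˡ`, so `n(l) = Θ(A^{2l})`, and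
`A^{2l} = L^{2d}` because `d = log_b A`. -/

theorem pow_sub_pow_div_sub_nonneg {x y : ℝ} (hx : 0 ≤ x) (hxy : x ≤ y) (l : ℕ) :
    0 ≤ (x ^ l - y ^ l) / (x - y) :=
  div_nonneg_of_nonpos (by linarith [pow_le_pow_left₀ hx hxy l]) (by linarith)

theorem pow_sub_pow_div_sub_le {x y : ℝ} (hx : 0 ≤ x) (hxy : x + 1 ≤ y) (l : ℕ) :
    (x ^ l - y ^ l) / (x - y) ≤ y ^ l := by
  rw [div_le_iff_of_neg (by linarith)]
  nlinarith [pow_nonneg hx l, pow_nonneg (hx.trans (by linarith : x ≤ y)) l]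

theorem pow_rpow_two_mul_log_div_log {x y : ℝ} (hx : 0 < x) (hx1 : x ≠ 1) (hy : 0 < y)
    (l : ℕ) : (x ^ l) ^ (2 * (Real.log y / Real.log x)) = (y ^ l) ^ 2 := by
  calc (x ^ l) ^ (2 * Real.logb x y)
      = (x ^ Real.logb x y) ^ ((l * 2 : ℕ) : ℝ) := by
        rw [← Real.rpow_natCast x l, ← Real.rpow_mul hx.le, ← Real.rpow_mul hx.le]
        push_cast
        ring_nf
    _ = (y ^ l) ^ 2 := by rw [Real.rpow_logb hx hx1 hy, Real.rpow_natCast, pow_mul]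

theorem add_one_le_sq_sub_sq {b c : ℕ} (hb : 2 ≤ b) (hcb : c < b) :
    (b : ℝ) + 1 ≤ (b : ℝ) ^ 2 - (c : ℝ) ^ 2 := by
  have hcb' : (c : ℝ) + 1 ≤ b := by exact_mod_cast hcb
  have hb' : (2 : ℝ) ≤ b := by exact_mod_cast hb
  nlinarith

section Bounds

variable {b c : ℕ} (hA : (b : ℝ) + 1 ≤ (b : ℝ) ^ 2 - (c : ℝ) ^ 2) (l : ℕ)
include hA

theorem two_le_sq_sub_sq : (2 : ℝ) ≤ (b : ℝ) ^ 2 - (c : ℝ) ^ 2 := by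
  have : (1 : ℝ) ≤ b := by nlinarith [sq_nonneg (c : ℝ)]
  linarith

theorem pow_le_sq_sub_sq_pow : (b : ℝ) ^ l ≤ ((b : ℝ) ^ 2 - (c : ℝ) ^ 2) ^ l :=
  pow_le_pow_left₀ (Nat.cast_nonneg b) (by linarith) l

theorem one_le_sq_sub_sq_pow : (1 : ℝ) ≤ ((b : ℝ) ^ 2 - (c : ℝ) ^ 2) ^ l :=
  one_le_pow₀ (by linarith [two_le_sq_sub_sq hA])

theorem two_mul_pow_sub_pow_div_sub_nonneg :
    0 ≤ 2 * (c : ℝ) * ((b : ℝ) ^ l - ((b : ℝ) ^ 2 - (c : ℝ) ^ 2) ^ l)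
      / ((b : ℝ) - ((b : ℝ) ^ 2 - (c : ℝ) ^ 2)) := by
  rw [mul_div_assoc]
  exact mul_nonneg (by positivity)
    (pow_sub_pow_div_sub_nonneg (Nat.cast_nonneg b) (by linarith) l)

theorem two_mul_pow_sub_pow_div_sub_le :
    2 * (c : ℝ) * ((b : ℝ) ^ l - ((b : ℝ) ^ 2 - (c : ℝ) ^ 2) ^ l)
      / ((b : ℝ) - ((b : ℝ) ^ 2 - (c : ℝ) ^ 2))
      ≤ 2 * c * ((b : ℝ) ^ 2 - (c : ℝ) ^ 2) ^ l := by
  rw [mul_div_assoc]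
  gcongr
  exact pow_sub_pow_div_sub_le (Nat.cast_nonneg b) hA l

theorem one_sub_pow_div_one_sub_mem_Icc :
    (1 - ((b : ℝ) ^ 2 - (c : ℝ) ^ 2) ^ l) / (1 - ((b : ℝ) ^ 2 - (c : ℝ) ^ 2))
      ∈ Set.Icc 0 (((b : ℝ) ^ 2 - (c : ℝ) ^ 2) ^ l) := by
  have h2 : (1 : ℝ) + 1 ≤ (b : ℝ) ^ 2 - (c : ℝ) ^ 2 := by linarith [two_le_sq_sub_sq hA]
  have h1 : (1 : ℝ) ≤ (b : ℝ) ^ 2 - (c : ℝ) ^ 2 := by linarith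
  simpa only [Set.mem_Icc, one_pow] using
    And.intro (pow_sub_pow_div_sub_nonneg zero_le_one h1 l)
      (pow_sub_pow_div_sub_le zero_le_one h2 l)

theorem scV_nonneg : 0 ≤ scV b c l := by
  unfold scV
  linarith [two_mul_pow_sub_pow_div_sub_nonneg hA l, (one_sub_pow_div_one_sub_mem_Icc hA l).2,
    pow_nonneg (Nat.cast_nonneg (α := ℝ) b) l]

theorem scV_le : scV b c l ≤ (4 + 2 * c) * ((b : ℝ) ^ 2 - (c : ℝ) ^ 2) ^ l := by
  unfold scV
  linarith [two_mul_pow_sub_pow_div_sub_le hA l, (one_sub_pow_div_one_sub_mem_Icc hA l).1,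
    pow_le_sq_sub_sq_pow hA l, one_le_sq_sub_sq_pow hA l]

theorem scE_nonneg : 0 ≤ scE b c l := by
  unfold scE
  linarith [two_mul_pow_sub_pow_div_sub_nonneg hA l, one_le_sq_sub_sq_pow hA l,
    pow_nonneg (Nat.cast_nonneg (α := ℝ) b) l]

theorem scE_le : scE b c l ≤ (4 + 2 * c) * ((b : ℝ) ^ 2 - (c : ℝ) ^ 2) ^ l := by
  unfold scE
  linarith [two_mul_pow_sub_pow_div_sub_le hA l, pow_le_sq_sub_sq_pow hA l]

theorem nFPC_le :
    nFPC b c l ≤ (2 * (4 + 2 * c) ^ 2 + 1) * (((b : ℝ) ^ 2 - (c : ℝ) ^ 2) ^ l) ^ 2 := by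
  have hV := pow_le_pow_left₀ (scV_nonneg hA l) (scV_le hA l) 2
  have hE := pow_le_pow_left₀ (scE_nonneg hA l) (scE_le hA l) 2
  rw [mul_pow] at hV hE
  unfold nFPC scP
  linarith

end Bounds

theorem sq_pow_le_nFPC (b c l : ℕ) :
    (((b : ℝ) ^ 2 - (c : ℝ) ^ 2) ^ l) ^ 2 ≤ nFPC b c l :=
  le_add_of_nonneg_left (add_nonneg (sq_nonneg _) (sq_nonneg _))

theorem fpc_qubits_linear_size_scaling_general (b c : ℕ) (hb : 2 ≤ b)
    (hcb : c < b) :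
    (∃ c₁ c₂ : ℝ, ∃ l₀ : ℕ, 0 < c₁ ∧ c₁ ≤ c₂ ∧ ∀ l ≥ l₀,
      c₁ * ((b : ℝ) ^ l) ^ (2 * (Real.log ((b : ℝ) ^ 2 - (c : ℝ) ^ 2) / Real.log b))
          ≤ nFPC b c l ∧
        nFPC b c l
          ≤ c₂ * ((b : ℝ) ^ l) ^ (2 * (Real.log ((b : ℝ) ^ 2 - (c : ℝ) ^ 2) / Real.log b))) ∧
    (Real.log ((b : ℝ) ^ 2 - (c : ℝ) ^ 2) / Real.log b ≤ 3 / 2 →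
      ∃ C : ℝ, ∃ l₀ : ℕ, 0 < C ∧ ∀ l ≥ l₀,
        nFPC b c l ≤ C * ((b : ℝ) ^ l) ^ (3 : ℕ)) := by
  have hA := add_one_le_sq_sub_sq hb hcb
  have hb1 : (1 : ℝ) < b := by exact_mod_cast hb
  have hL : ∀ l : ℕ,
      ((b : ℝ) ^ l) ^ (2 * (Real.log ((b : ℝ) ^ 2 - (c : ℝ) ^ 2) / Real.log b))
        = (((b : ℝ) ^ 2 - (c : ℝ) ^ 2) ^ l) ^ 2 := fun l =>
    pow_rpow_two_mul_log_div_log (by linarith) hb1.ne' (by linarith) l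
  set K : ℝ := 2 * (4 + 2 * c) ^ 2 + 1
  have hK : 1 ≤ K := le_add_of_nonneg_left (by positivity)
  refine ⟨⟨1, K, 0, one_pos, hK, fun l _ => ?_⟩,
    fun hd => ⟨K, 0, by linarith, fun l _ => ?_⟩⟩
  · rw [hL, one_mul]
    exact ⟨sq_pow_le_nFPC b c l, nFPC_le hA l⟩
  · have hdim := Real.rpow_le_rpow_of_exponent_le (x := (b : ℝ) ^ l) (one_le_pow₀ hb1.le)
      (show 2 * (Real.log ((b : ℝ) ^ 2 - (c : ℝ) ^ 2) / Real.log b) ≤ ((3 : ℕ) : ℝ) by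
        push_cast; linarith)
    rw [Real.rpow_natCast] at hdim
    calc nFPC b c l ≤ K * (((b : ℝ) ^ 2 - (c : ℝ) ^ 2) ^ l) ^ 2 := nFPC_le hA l
      _ = K * ((b : ℝ) ^ l) ^ (2 * (Real.log ((b : ℝ) ^ 2 - (c : ℝ) ^ 2) / Real.log b)) := by
        rw [hL]
      _ ≤ K * ((b : ℝ) ^ l) ^ (3 : ℕ) := by gcongr

/-- **Qubit count in terms of the linear lattice size.**
With `L = b^l` the linear lattice size and `d = log(b²-c²)/log b` the dimension
of the Sierpinski carpet `SC(b,c)`, the number of physical qubits of the level-`l`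
fractal product code scales as `Θ(L^{2d})`; in particular if `d ≤ 3/2` then
`n(l) = O(L³)`. -/
theorem fpc_qubits_linear_size_scaling (b c : ℕ) (hb : 2 ≤ b) (hc : 1 ≤ c)
    (hcb : c < b) (heven : Even (b - c)) :
    (∃ c₁ c₂ : ℝ, ∃ l₀ : ℕ, 0 < c₁ ∧ c₁ ≤ c₂ ∧ ∀ l ≥ l₀,
      c₁ * ((b : ℝ) ^ l) ^ (2 * (Real.log ((b : ℝ) ^ 2 - (c : ℝ) ^ 2) / Real.log b))
          ≤ nFPC b c l ∧
        nFPC b c l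
          ≤ c₂ * ((b : ℝ) ^ l) ^ (2 * (Real.log ((b : ℝ) ^ 2 - (c : ℝ) ^ 2) / Real.log b))) ∧
    (Real.log ((b : ℝ) ^ 2 - (c : ℝ) ^ 2) / Real.log b ≤ 3 / 2 →
      ∃ C : ℝ, ∃ l₀ : ℕ, 0 < C ∧ ∀ l ≥ l₀,
        nFPC b c l ≤ C * ((b : ℝ) ^ l) ^ (3 : ℕ)) :=
  fpc_qubits_linear_size_scaling_general b c hb hcb
end
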